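/- arXiv:1006.3487 — 3 statements merged into one kernel-verified Lean document; each statement's English description precedes it below -/
import Mathlib

section
/- For 1 ≤ i ≤ n, let w^{(i)} ∈ (ℝ^{n+1})^* be the linear functional with first i coordinates equal to 1 and the remaining n+1−i coordinates equal to 0. Then for any positive parameters a, the face of Ass_n^{III}(a) maximizing w^{(i)} and the face maximizing −w^{(i)} are both facets, and the linear spans of their difference sets both equal span{ e_k − e_{k+1} : 1 ≤ k ≤ n, k ≠ i }; in particular these two facets are parallel. -/
open Finset

/-- Cyclic adjacency of vertex labels of the convex `m`-gon. -/
def adjacent (m : ℕ) (a b : Fin m) : Prop :=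
  (a.val + 1) % m = b.val ∨ (b.val + 1) % m = a.val

/-- A diagonal of the labeled `m`-gon: an unordered pair of distinct,
non cyclically adjacent labels. -/
def IsDiagonal (m : ℕ) (d : Finset (Fin m)) : Prop :=
  ∃ a b : Fin m, a ≠ b ∧ ¬ adjacent m a b ∧ d = {a, b}

/-- Two diagonals cross iff their endpoints alternate in cyclic order
(equivalently, exactly one endpoint of the second lies strictly between
the two endpoints of the first). -/
def Crosses (m : ℕ) (d e : Finset (Fin m)) : Prop :=
  ∃ p q r s : Fin m, p < q ∧ q < r ∧ r < s ∧
    ((d = {p, r} ∧ e = {q, s}) ∨ (d = {q, s} ∧ e = {p, r}))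

/-- A triangulation: a maximal set of pairwise non-crossing diagonals. -/
def IsTriangulation (m : ℕ) (t : Finset (Finset (Fin m))) : Prop :=
  (∀ d ∈ t, IsDiagonal m d) ∧
  (∀ d ∈ t, ∀ e ∈ t, ¬ Crosses m d e) ∧
  (∀ d, IsDiagonal m d → (∀ e ∈ t, ¬ Crosses m d e) → d ∈ t)

/-- The pair `{a, b}` is a polygon edge (cyclically adjacent labels) or a
diagonal belonging to `t`. -/
def edgeOrDiag (m : ℕ) (t : Finset (Finset (Fin m))) (a b : Fin m) : Prop :=
  adjacent m a b ∨ ({a, b} : Finset (Fin m)) ∈ t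

/-- Area of the triangle with vertices `p`, `q`, `r` in the plane. -/
noncomputable def triArea (p q r : ℝ × ℝ) : ℝ :=
  |(q.1 - p.1) * (r.2 - p.2) - (r.1 - p.1) * (q.2 - p.2)| / 2

open Classical in
/-- The GKZ vector of a triangulation `t`: its `i`-th coordinate is the sum of
the areas of the triangles of `t` containing the vertex `i`. -/
noncomputable def gkz (m : ℕ) (q : Fin m → ℝ × ℝ) (t : Finset (Finset (Fin m))) :
    Fin m → ℝ := fun i =>
  ∑ a : Fin m, ∑ b : Fin m, ∑ c : Fin m,
    if a < b ∧ b < c ∧ edgeOrDiag m t a b ∧ edgeOrDiag m t b c ∧ edgeOrDiag m t a c ∧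
        (i = a ∨ i = b ∨ i = c)
    then triArea (q a) (q b) (q c) else 0

/-- The points `q 0, …, q (m-1)` are in strictly convex position, labeled
counterclockwise: every triple of labels in increasing order is positively oriented. -/
def ConvexCCW (m : ℕ) (q : Fin m → ℝ × ℝ) : Prop :=
  ∀ i j k : Fin m, i < j → j < k →
    0 < ((q j).1 - (q i).1) * ((q k).2 - (q i).2) -
        ((q k).1 - (q i).1) * ((q j).2 - (q i).2)

/-- The secondary polytope of the convex polygon with vertices `q`. -/
noncomputable def secondary (m : ℕ) (q : Fin m → ℝ × ℝ) : Set (Fin m → ℝ) :=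
  convexHull ℝ {v | ∃ t, IsTriangulation m t ∧ v = gkz m q t}

def dot {k : ℕ} (w x : Fin k → ℝ) : ℝ := ∑ i, w i * x i

/-- The set of points of `P` maximizing the linear functional `⟨w, ·⟩`. -/
def maxFace {k : ℕ} (P : Set (Fin k → ℝ)) (w : Fin k → ℝ) : Set (Fin k → ℝ) :=
  {x ∈ P | ∀ y ∈ P, dot w y ≤ dot w x}

/-- A face of `P`: the set of points of `P` maximizing some linear functional. -/
def IsFaceOf {k : ℕ} (P F : Set (Fin k → ℝ)) : Prop :=
  ∃ w : Fin k → ℝ, F = maxFace P w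

/-- Linear span of the difference set of `F`. -/
def spanDiff {k : ℕ} (F : Set (Fin k → ℝ)) : Submodule ℝ (Fin k → ℝ) :=
  Submodule.span ℝ {z | ∃ u ∈ F, ∃ v ∈ F, z = u - v}

/-- Dimension of a set: the rank of the span of its difference set. -/
noncomputable def dimOf {k : ℕ} (F : Set (Fin k → ℝ)) : ℕ :=
  Module.finrank ℝ (spanDiff F)

/-- A facet: a face of dimension one less than the polytope. -/
def IsFacetOf {k : ℕ} (P F : Set (Fin k → ℝ)) : Prop :=
  IsFaceOf P F ∧ dimOf F + 1 = dimOf P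

/-- Two facets are parallel if the linear spans of their difference sets coincide. -/
def ParallelFaces {k : ℕ} (F F' : Set (Fin k → ℝ)) : Prop :=
  spanDiff F = spanDiff F'

/-- A vertex of `P`. -/
def vertexOf {k : ℕ} (P : Set (Fin k → ℝ)) (v : Fin k → ℝ) : Prop :=
  v ∈ P ∧ IsFaceOf P {v}

/-- The standard basis vector `e i` of `ℝ^k`. -/
noncomputable def eVec {k : ℕ} (i : Fin k) : Fin k → ℝ := Pi.single i 1

/-- The simple root `α i = e i − e (i+1)` of type `A n`. -/
noncomputable def simpleRoot (n : ℕ) (i : Fin n) : Fin (n+1) → ℝ :=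
  eVec i.castSucc - eVec i.succ

/-- Almost positive roots of type `A n`: positive roots together with the
negatives of the simple roots. -/
def AlmostPositive (n : ℕ) (β : Fin (n+1) → ℝ) : Prop :=
  (∃ i j : Fin (n+1), i < j ∧ β = eVec i - eVec j) ∨ (∃ i : Fin n, β = -simpleRoot n i)

/-- The `i`-th snake diagonal `δ_i = {⌈(i+1)/2⌉, n+2−⌊(i+1)/2⌋}` of the
`(n+3)`-gon (here `i : Fin n` is `0`-based). -/
def snake (n : ℕ) (i : Fin n) : Finset (Fin (n+3)) :=
  {⟨(i.val + 2) / 2, by have := i.isLt; omega⟩, ⟨n + 2 - (i.val + 1) / 2, by omega⟩}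

/-- The correspondence between almost positive roots and diagonals of the
`(n+3)`-gon: `−α i` corresponds to the snake diagonal `δ i`, and the positive
root `α i + ⋯ + α j = e i − e (j+1)` corresponds to the unique diagonal crossing
exactly the snake diagonals `δ i, …, δ j`. -/
def RootDiag (n : ℕ) (β : Fin (n+1) → ℝ) (d : Finset (Fin (n+3))) : Prop :=
  (∃ i : Fin n, β = -simpleRoot n i ∧ d = snake n i) ∨
  (∃ i j : Fin n, i ≤ j ∧ β = eVec i.castSucc - eVec j.succ ∧ IsDiagonal (n+3) d ∧
    ∀ k : Fin n, (Crosses (n+3) d (snake n k) ↔ i ≤ k ∧ k ≤ j))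

/-- Two almost positive roots are compatible if their corresponding diagonals
do not cross. -/
def Compatible (n : ℕ) (β γ : Fin (n+1) → ℝ) : Prop :=
  ∀ d e : Finset (Fin (n+3)), RootDiag n β d → RootDiag n γ e → ¬ Crosses (n+3) d e

/-- A cluster of type `A n`: a maximal set of pairwise compatible almost
positive roots. -/
def IsCluster (n : ℕ) (C : Finset (Fin (n+1) → ℝ)) : Prop :=
  (∀ β ∈ C, AlmostPositive n β) ∧
  (∀ β ∈ C, ∀ γ ∈ C, Compatible n β γ) ∧
  (∀ β, AlmostPositive n β → (∀ γ ∈ C, Compatible n β γ) → β ∈ C)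

/-- The cone of nonnegative linear combinations of the elements of `C`. -/
def coneOf (n : ℕ) (C : Finset (Fin (n+1) → ℝ)) : Set (Fin (n+1) → ℝ) :=
  {x | ∃ c : (Fin (n+1) → ℝ) → ℝ, (∀ β ∈ C, 0 ≤ c β) ∧ x = ∑ β ∈ C, c β • β}

/-- The normal cone of `P` at `v`, taken within the hyperplane
`H = {x : ∑ i, x i = 0}`. -/
def normalConeIn (n : ℕ) (P : Set (Fin (n+1) → ℝ)) (v : Fin (n+1) → ℝ) :
    Set (Fin (n+1) → ℝ) :=
  {w | (∑ i, w i = 0) ∧ ∀ x ∈ P, dot w x ≤ dot w v}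

/-- A cluster-fan polytope of type `A n`: a polytope contained in the
hyperplane `H`, of dimension `n`, whose vertex normal cones within `H` are
exactly the cones spanned by the clusters of type `A n`. -/
def IsClusterFanPolytope (n : ℕ) (P : Set (Fin (n+1) → ℝ)) : Prop :=
  (∃ V : Finset (Fin (n+1) → ℝ), P = convexHull ℝ (V : Set (Fin (n+1) → ℝ))) ∧
  (∀ x ∈ P, ∑ i, x i = 0) ∧
  dimOf P = n ∧
  {S : Set (Fin (n+1) → ℝ) | ∃ v, vertexOf P v ∧ S = normalConeIn n P v} =
    {S : Set (Fin (n+1) → ℝ) |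
      ∃ C : Finset (Fin (n+1) → ℝ), IsCluster n C ∧ S = coneOf n C}

/-- The simplex `Δ_{[i,…,j]} = conv{e i, …, e j} ⊂ ℝ^{n+1}`. -/
noncomputable def stdSimplexSeg (n : ℕ) (i j : Fin (n+1)) : Set (Fin (n+1) → ℝ) :=
  convexHull ℝ {x | ∃ k : Fin (n+1), i ≤ k ∧ k ≤ j ∧ x = eVec k}

/-- Index set of the pairs `1 ≤ i ≤ j ≤ n+1`. -/
def pairIdx (n : ℕ) : Finset (Fin (n+1) × Fin (n+1)) :=
  Finset.univ.filter (fun p => p.1 ≤ p.2)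

/-- The associahedron `Ass_n^{III}(a)`: the Minkowski sum
`∑_{i ≤ j} a_{ij} Δ_{[i,…,j]}`. -/
noncomputable def AssIII (n : ℕ) (a : Fin (n+1) × Fin (n+1) → ℝ) :
    Set (Fin (n+1) → ℝ) :=
  {x | ∃ f : Fin (n+1) × Fin (n+1) → Fin (n+1) → ℝ,
    (∀ p ∈ pairIdx n, f p ∈ stdSimplexSeg n p.1 p.2) ∧
    x = ∑ p ∈ pairIdx n, a p • f p}

/-- The functional with first `i` coordinates `1`, the rest `0`. -/
def wFun (n : ℕ) (i : ℕ) : Fin (n+1) → ℝ := fun k => if (k : ℕ) < i then 1 else 0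

/-!
Every point of `Ass_n^{III}(a)` has coordinate sum `∑ a_{ij}`, and on the face maximizing `w`
the value of `w` is constant, so the difference span of that face lies in the common kernel of
`w` and of the coordinate sum; for `w = ±w^{(i)}` this kernel has dimension `n - 1`.
Conversely, choosing in each summand `a_{ij} Δ_{[i,j]}` a vertex maximizing `w` gives a point of
the face, and when `w` takes equal values at `k` and `k + 1` one may switch the vertex of the
summand `a_{k,k+1} Δ_{[k,k+1]}`: the two points differ by `a_{k,k+1} (e_k - e_{k+1})`.
For `w^{(i)}` this yields all simple roots except the `i`-th, which are `n - 1` independent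
vectors. The same argument with `w = 0` shows that the polytope itself has dimension `n`.
-/

open Module Matrix

section Generalities

variable {m : ℕ}

lemma dot_eq_dotProductBilin (w x : Fin m → ℝ) : dot w x = dotProductBilin ℝ ℝ w x := rfl

lemma dot_eVec (w : Fin m → ℝ) (k : Fin m) : dot w (eVec k) = w k := by
  simp [dot_eq_dotProductBilin, eVec, dotProduct_single]

lemma dot_sum_smul {ι : Type*} (w : Fin m → ℝ) (s : Finset ι) (c : ι → ℝ)
    (f : ι → Fin m → ℝ) : dot w (∑ p ∈ s, c p • f p) = ∑ p ∈ s, c p * dot w (f p) := by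
  simp [dot_eq_dotProductBilin]

lemma dot_le_of_mem_convexHull {s : Set (Fin m → ℝ)} {w : Fin m → ℝ} {c : ℝ}
    (h : ∀ y ∈ s, dot w y ≤ c) {x : Fin m → ℝ} (hx : x ∈ convexHull ℝ s) : dot w x ≤ c :=
  convexHull_min h (convex_halfSpace_le (dotProductBilin ℝ ℝ w).isLinear c) hx

lemma dot_eq_of_mem_convexHull {s : Set (Fin m → ℝ)} {w : Fin m → ℝ} {c : ℝ}
    (h : ∀ y ∈ s, dot w y = c) {x : Fin m → ℝ} (hx : x ∈ convexHull ℝ s) : dot w x = c :=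
  convexHull_min h (convex_hyperplane (dotProductBilin ℝ ℝ w).isLinear c) hx

lemma maxFace_zero (P : Set (Fin m → ℝ)) : maxFace P 0 = P := by
  ext x
  simp [maxFace, dot]

lemma dot_eq_of_mem_maxFace {P : Set (Fin m → ℝ)} {w u v : Fin m → ℝ}
    (hu : u ∈ maxFace P w) (hv : v ∈ maxFace P w) : dot w u = dot w v :=
  le_antisymm (hv.2 u hu.1) (hu.2 v hv.1)

lemma spanDiff_le_ker {F : Set (Fin m → ℝ)} (φ : (Fin m → ℝ) →ₗ[ℝ] ℝ)
    (h : ∀ u ∈ F, ∀ v ∈ F, φ u = φ v) : spanDiff F ≤ LinearMap.ker φ := by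
  rw [spanDiff, Submodule.span_le]
  rintro _ ⟨u, hu, v, hv, rfl⟩
  simp [h u hu v hv]

lemma mem_spanDiff_of_sub_eq_smul {F : Set (Fin m → ℝ)} {u v z : Fin m → ℝ} {c : ℝ}
    (hu : u ∈ F) (hv : v ∈ F) (hc : c ≠ 0) (hz : u - v = c • z) : z ∈ spanDiff F := by
  have huv : u - v ∈ spanDiff F := Submodule.subset_span ⟨u, hu, v, hv, rfl⟩
  rw [hz] at huv
  exact (Submodule.smul_mem_iff _ hc).mp huv

lemma finrank_ker_of_surjective {V W : Type*} [AddCommGroup V] [Module ℝ V]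
    [FiniteDimensional ℝ V] [AddCommGroup W] [Module ℝ W] (f : V →ₗ[ℝ] W)
    (hf : Function.Surjective f) :
    finrank ℝ (LinearMap.ker f) = finrank ℝ V - finrank ℝ W := by
  have h := LinearMap.finrank_range_add_finrank_ker f
  rw [LinearMap.range_eq_top.mpr hf, finrank_top] at h
  omega

end Generalities

section SimpleRoots

variable {n : ℕ}

/-- With `k` counted from `0`, this omits the `i`-th simple root of the paper's numbering. -/
def rootsExcept (n i : ℕ) : Set (Fin (n+1) → ℝ) :=
  {z | ∃ k : Fin n, (k : ℕ) + 1 ≠ i ∧ z = eVec k.castSucc - eVec k.succ}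

lemma linearIndependent_simpleRoot : LinearIndependent ℝ (simpleRoot n) := by
  rw [Fintype.linearIndependent_iff]
  intro c hc k
  -- the partial sum of the first `k + 1` coordinates is dual to the simple roots
  have hdual : ∀ l : Fin n,
      dot (fun j : Fin (n+1) => if (j : ℕ) ≤ k then 1 else 0) (simpleRoot n l) =
        if l = k then 1 else 0 := by
    intro l
    simp only [simpleRoot, dot_eq_dotProductBilin, map_sub, dotProductBilin_apply_apply, eVec,
      dotProduct_single, mul_one, Fin.val_castSucc, Fin.val_succ, Fin.ext_iff]
    split_ifs <;> first | omega | norm_num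
  have h := congrArg (dot (fun j : Fin (n+1) => if (j : ℕ) ≤ k then 1 else 0)) hc
  simp only [dot_sum_smul, hdual, mul_ite, mul_one, mul_zero, Finset.sum_ite_eq',
    Finset.mem_univ, if_true] at h
  simpa [dot] using h

lemma finrank_span_range_simpleRoot :
    finrank ℝ (Submodule.span ℝ (Set.range (simpleRoot n))) = n := by
  rw [finrank_span_eq_card linearIndependent_simpleRoot, Fintype.card_fin]

lemma finrank_span_rootsExcept {i : ℕ} (hi1 : 1 ≤ i) (hin : i ≤ n) :
    finrank ℝ (Submodule.span ℝ (rootsExcept n i)) = n - 1 := by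
  have hrange : rootsExcept n i =
      Set.range (simpleRoot n ∘
        (Subtype.val : {k : Fin n // k ≠ ⟨i - 1, by omega⟩} → Fin n)) := by
    ext z
    simp only [rootsExcept, Set.mem_ofPred_eq, Set.mem_range, Subtype.exists,
      Function.comp_apply, simpleRoot, ne_eq, Fin.ext_iff]
    constructor
    · rintro ⟨k, hk, rfl⟩
      exact ⟨k, by omega, rfl⟩
    · rintro ⟨k, hk, rfl⟩
      exact ⟨k, by omega, rfl⟩
  rw [hrange, finrank_span_eq_card (linearIndependent_simpleRoot.comp _ Subtype.val_injective),
    Fintype.card_subtype_compl, Fintype.card_fin, Fintype.card_unique]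

end SimpleRoots

section Kernels

variable {n : ℕ}

lemma finrank_ker_dot_one :
    finrank ℝ (LinearMap.ker (dotProductBilin ℝ ℝ (1 : Fin (n+1) → ℝ))) = n := by
  rw [finrank_ker_of_surjective, finrank_fin_fun, finrank_self, Nat.add_sub_cancel]
  intro c
  exact ⟨c • eVec 0, by rw [map_smul, ← dot_eq_dotProductBilin, dot_eVec]; simp⟩

lemma finrank_ker_dot_wFun_inf_ker_dot_one {i : ℕ} (hi1 : 1 ≤ i) (hin : i ≤ n) :
    finrank ℝ ↥(LinearMap.ker (dotProductBilin ℝ ℝ (wFun n i)) ⊓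
      LinearMap.ker (dotProductBilin ℝ ℝ (1 : Fin (n+1) → ℝ))) = n - 1 := by
  rw [← LinearMap.ker_prod, finrank_ker_of_surjective, finrank_fin_fun, finrank_prod,
    finrank_self]
  · omega
  -- `e_0` and `e_n` lie on either side of the cut at `i`
  rintro ⟨c, d⟩
  refine ⟨c • eVec 0 + (d - c) • eVec (Fin.last n), ?_⟩
  have h0 : 0 < i := by omega
  have hlast : ¬ n < i := by omega
  simp [eVec, dotProduct_single, wFun, h0, hlast]

end Kernels

section Associahedron

variable {n : ℕ} {a : Fin (n+1) × Fin (n+1) → ℝ}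

noncomputable def choicePoint (a : Fin (n+1) × Fin (n+1) → ℝ)
    (g : Fin (n+1) × Fin (n+1) → Fin (n+1)) : Fin (n+1) → ℝ :=
  ∑ p ∈ pairIdx n, a p • eVec (g p)

def IsMaxChoice (w : Fin (n+1) → ℝ) (g : Fin (n+1) × Fin (n+1) → Fin (n+1)) : Prop :=
  ∀ p ∈ pairIdx n, p.1 ≤ g p ∧ g p ≤ p.2 ∧ ∀ k, p.1 ≤ k → k ≤ p.2 → w k ≤ w (g p)

lemma mem_pairIdx {p : Fin (n+1) × Fin (n+1)} : p ∈ pairIdx n ↔ p.1 ≤ p.2 := by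
  simp [pairIdx]

lemma exists_isMaxChoice (w : Fin (n+1) → ℝ) : ∃ g, IsMaxChoice w g := by
  have h : ∀ p : Fin (n+1) × Fin (n+1), ∃ j, p ∈ pairIdx n →
      p.1 ≤ j ∧ j ≤ p.2 ∧ ∀ k, p.1 ≤ k → k ≤ p.2 → w k ≤ w j := by
    intro p
    by_cases hp : p.1 ≤ p.2
    · obtain ⟨j, hj, hmax⟩ := Finset.exists_max_image (Finset.Icc p.1 p.2) w
        ⟨p.1, Finset.mem_Icc.mpr ⟨le_rfl, hp⟩⟩
      exact ⟨j, fun _ => ⟨(Finset.mem_Icc.mp hj).1, (Finset.mem_Icc.mp hj).2,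
        fun k h1 h2 => hmax k (Finset.mem_Icc.mpr ⟨h1, h2⟩)⟩⟩
    · exact ⟨p.1, fun h => absurd (mem_pairIdx.mp h) hp⟩
  choose g hg using h
  exact ⟨g, hg⟩

lemma dot_one_of_mem_stdSimplexSeg {p q : Fin (n+1)} {x : Fin (n+1) → ℝ}
    (hx : x ∈ stdSimplexSeg n p q) : dot 1 x = 1 :=
  dot_eq_of_mem_convexHull (by rintro _ ⟨k, -, -, rfl⟩; simp [dot_eVec]) hx

lemma dot_one_of_mem_AssIII {x : Fin (n+1) → ℝ} (hx : x ∈ AssIII n a) :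
    dot 1 x = ∑ p ∈ pairIdx n, a p := by
  obtain ⟨f, hf, rfl⟩ := hx
  rw [dot_sum_smul]
  exact Finset.sum_congr rfl fun p hp => by
    rw [dot_one_of_mem_stdSimplexSeg (hf p hp), mul_one]

lemma choicePoint_mem_maxFace (ha : ∀ p : Fin (n+1) × Fin (n+1), p.1 ≤ p.2 → 0 < a p)
    {w : Fin (n+1) → ℝ} {g : Fin (n+1) × Fin (n+1) → Fin (n+1)} (hg : IsMaxChoice w g) :
    choicePoint a g ∈ maxFace (AssIII n a) w := by
  refine ⟨⟨fun p => eVec (g p), fun p hp => subset_convexHull ℝ _ ⟨g p, (hg p hp).1,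
    (hg p hp).2.1, rfl⟩, rfl⟩, ?_⟩
  rintro _ ⟨f, hf, rfl⟩
  simp only [choicePoint, dot_sum_smul, dot_eVec]
  refine Finset.sum_le_sum fun p hp => ?_
  refine mul_le_mul_of_nonneg_left (dot_le_of_mem_convexHull ?_ (hf p hp))
    (ha p (mem_pairIdx.mp hp)).le
  rintro _ ⟨k, h1, h2, rfl⟩
  rw [dot_eVec]
  exact (hg p hp).2.2 k h1 h2

lemma choicePoint_update_sub_update (g : Fin (n+1) × Fin (n+1) → Fin (n+1))
    {p₀ : Fin (n+1) × Fin (n+1)} (hp₀ : p₀ ∈ pairIdx n) (j j' : Fin (n+1)) :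
    choicePoint a (Function.update g p₀ j) - choicePoint a (Function.update g p₀ j') =
      a p₀ • (eVec j - eVec j') := by
  rw [choicePoint, choicePoint, ← Finset.sum_sub_distrib, Finset.sum_eq_single_of_mem p₀ hp₀]
  · simp [smul_sub]
  · intro p _ hp
    simp [Function.update_of_ne hp]

lemma IsMaxChoice.update {w : Fin (n+1) → ℝ} {g : Fin (n+1) × Fin (n+1) → Fin (n+1)}
    (hg : IsMaxChoice w g) {k : Fin n} (hk : w k.castSucc = w k.succ) {j : Fin (n+1)}
    (hj : j = k.castSucc ∨ j = k.succ) :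
    IsMaxChoice w (Function.update g (k.castSucc, k.succ) j) := by
  intro p hp
  by_cases hpk : p = (k.castSucc, k.succ)
  · subst hpk
    have hseg : ∀ l : Fin (n+1), k.castSucc ≤ l → l ≤ k.succ →
        l = k.castSucc ∨ l = k.succ := by
      intro l h1 h2
      simp only [Fin.le_def, Fin.ext_iff, Fin.val_castSucc, Fin.val_succ] at h1 h2 ⊢
      omega
    have hwj : w j = w k.castSucc := by rcases hj with rfl | rfl <;> simp [hk]
    rw [Function.update_self]
    refine ⟨?_, ?_, fun l h1 h2 => ?_⟩
    · rcases hj with rfl | rfl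
      exacts [le_rfl, Fin.castSucc_le_succ k]
    · rcases hj with rfl | rfl
      exacts [Fin.castSucc_le_succ k, le_rfl]
    · rcases hseg l h1 h2 with rfl | rfl <;> simp [hwj, hk]
  · rw [Function.update_of_ne hpk]
    exact hg p hp

lemma simpleRoot_mem_spanDiff_maxFace (ha : ∀ p : Fin (n+1) × Fin (n+1), p.1 ≤ p.2 → 0 < a p)
    {w : Fin (n+1) → ℝ} {k : Fin n} (hk : w k.castSucc = w k.succ) :
    simpleRoot n k ∈ spanDiff (maxFace (AssIII n a) w) := by
  obtain ⟨g, hg⟩ := exists_isMaxChoice w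
  have hp₀ : ((k.castSucc, k.succ) : Fin (n+1) × Fin (n+1)) ∈ pairIdx n :=
    mem_pairIdx.mpr (Fin.castSucc_le_succ k)
  exact mem_spanDiff_of_sub_eq_smul (choicePoint_mem_maxFace ha (hg.update hk (Or.inl rfl)))
    (choicePoint_mem_maxFace ha (hg.update hk (Or.inr rfl))) (ha _ (mem_pairIdx.mp hp₀)).ne'
    (choicePoint_update_sub_update g hp₀ _ _)

lemma spanDiff_maxFace_le_ker (w : Fin (n+1) → ℝ) :
    spanDiff (maxFace (AssIII n a) w) ≤
      LinearMap.ker (dotProductBilin ℝ ℝ w) ⊓ LinearMap.ker (dotProductBilin ℝ ℝ 1) :=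
  le_inf (spanDiff_le_ker _ fun _ hu _ hv => dot_eq_of_mem_maxFace hu hv)
    (spanDiff_le_ker _ fun _ hu _ hv =>
      (dot_one_of_mem_AssIII hu.1).trans (dot_one_of_mem_AssIII hv.1).symm)

lemma spanDiff_AssIII (ha : ∀ p : Fin (n+1) × Fin (n+1), p.1 ≤ p.2 → 0 < a p) :
    spanDiff (AssIII n a) = Submodule.span ℝ (Set.range (simpleRoot n)) := by
  rw [← maxFace_zero (AssIII n a)]
  refine (Submodule.eq_of_le_of_finrank_le ?_ ?_).symm
  · exact Submodule.span_le.mpr <| Set.range_subset_iff.mpr fun k =>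
      simpleRoot_mem_spanDiff_maxFace ha rfl
  · refine (Submodule.finrank_mono (spanDiff_maxFace_le_ker 0)).trans ?_
    rw [map_zero, LinearMap.ker_zero, top_inf_eq, finrank_ker_dot_one,
      finrank_span_range_simpleRoot]

lemma spanDiff_maxFace_smul_wFun (ha : ∀ p : Fin (n+1) × Fin (n+1), p.1 ≤ p.2 → 0 < a p)
    {i : ℕ} (hi1 : 1 ≤ i) (hin : i ≤ n) {c : ℝ} (hc : c ≠ 0) :
    spanDiff (maxFace (AssIII n a) (c • wFun n i)) = Submodule.span ℝ (rootsExcept n i) := by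
  refine (Submodule.eq_of_le_of_finrank_le ?_ ?_).symm
  · refine Submodule.span_le.mpr ?_
    rintro _ ⟨k, hk, rfl⟩
    refine simpleRoot_mem_spanDiff_maxFace ha ?_
    simp only [Pi.smul_apply, wFun, Fin.val_castSucc, Fin.val_succ]
    congr 1
    split_ifs <;> first | rfl | omega
  · refine (Submodule.finrank_mono (spanDiff_maxFace_le_ker _)).trans ?_
    rw [map_smul, LinearMap.ker_smul _ _ hc, finrank_ker_dot_wFun_inf_ker_dot_one hi1 hin,
      finrank_span_rootsExcept hi1 hin]

end Associahedron

/-- For `1 ≤ i ≤ n`, let `w` be the functional with first `i`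
coordinates `1` and the rest `0`. The faces of `Ass_n^{III}(a)` maximizing `w`
and `−w` are facets, and the spans of their difference sets both equal
`span{e k − e (k+1) : 1 ≤ k ≤ n, k ≠ i}`; in particular these two facets are
parallel. -/
theorem assIII_special_facets (n : ℕ)
    (a : Fin (n+1) × Fin (n+1) → ℝ)
    (ha : ∀ p : Fin (n+1) × Fin (n+1), p.1 ≤ p.2 → 0 < a p)
    (i : ℕ) (hi1 : 1 ≤ i) (hin : i ≤ n) :
    IsFacetOf (AssIII n a) (maxFace (AssIII n a) (wFun n i)) ∧
    IsFacetOf (AssIII n a) (maxFace (AssIII n a) (-wFun n i)) ∧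
    spanDiff (maxFace (AssIII n a) (wFun n i)) =
      Submodule.span ℝ {z : Fin (n+1) → ℝ |
        ∃ k : Fin n, (k : ℕ) + 1 ≠ i ∧ z = eVec k.castSucc - eVec k.succ} ∧
    spanDiff (maxFace (AssIII n a) (-wFun n i)) =
      Submodule.span ℝ {z : Fin (n+1) → ℝ |
        ∃ k : Fin n, (k : ℕ) + 1 ≠ i ∧ z = eVec k.castSucc - eVec k.succ} ∧
    ParallelFaces (maxFace (AssIII n a) (wFun n i))
      (maxFace (AssIII n a) (-wFun n i)) := by
  have hP : dimOf (AssIII n a) = n := by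
    rw [dimOf, spanDiff_AssIII ha, finrank_span_range_simpleRoot]
  have hplus := spanDiff_maxFace_smul_wFun ha hi1 hin one_ne_zero
  have hminus := spanDiff_maxFace_smul_wFun ha hi1 hin (neg_ne_zero.mpr one_ne_zero)
  rw [one_smul] at hplus
  rw [neg_one_smul] at hminus
  have hdim : finrank ℝ (Submodule.span ℝ (rootsExcept n i)) + 1 = n := by
    rw [finrank_span_rootsExcept hi1 hin]; omega
  exact ⟨⟨⟨_, rfl⟩, by rwa [dimOf, hplus, hP]⟩, ⟨⟨_, rfl⟩, by rwa [dimOf, hminus, hP]⟩,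
    hplus, hminus, hplus.trans hminus.symm⟩
end

section
/- Let n ≥ 1 and let D be the set of 2n diagonals of the labeled (n+3)-gon consisting of {i, n+2} for 1 ≤ i ≤ n and {0, i+1} for 1 ≤ i ≤ n. Then each of the two diagonals {1, n+2} and {0, n+1} is non-crossing with exactly n−1 of the other elements of D; more generally, for 1 ≤ i ≤ n the diagonal {i, n+2} is non-crossing with exactly (n−1)+(i−1) other elements of D. -/
open Finset

/-! Two diagonals with a common endpoint never cross, and `{0, k}` crosses `{i, n + 2}`
exactly when `i < k`. Hence `{i, n + 2}` misses the other `n - 1` diagonals at `n + 2` and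
the `i - 1` diagonals `{0, k}` with `k ≤ i`, while `{0, n + 1}` crosses every `{j, n + 2}`
with `j ≤ n` and misses the other `n - 1` diagonals at `0`. -/

theorem Finset.pair_eq_pair_iff_of_lt {α : Type*} [LinearOrder α] {a b c d : α}
    (hab : a < b) (hcd : c < d) : ({a, b} : Finset α) = {c, d} ↔ a = c ∧ b = d := by
  rw [← Finset.coe_inj, Finset.coe_pair, Finset.coe_pair, Set.pair_eq_pair_iff]
  refine ⟨fun h => h.resolve_right ?_, Or.inl⟩
  rintro ⟨rfl, rfl⟩
  exact lt_asymm hab hcd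

theorem crosses_pair_iff {m : ℕ} {a b c d : Fin m} (hab : a < b) (hcd : c < d) :
    Crosses m {a, b} {c, d} ↔ a < c ∧ c < b ∧ b < d ∨ c < a ∧ a < d ∧ d < b := by
  constructor
  · rintro ⟨p, q, r, s, hpq, hqr, hrs, ⟨h₁, h₂⟩ | ⟨h₁, h₂⟩⟩
    · obtain ⟨rfl, rfl⟩ := (Finset.pair_eq_pair_iff_of_lt hab (hpq.trans hqr)).1 h₁
      obtain ⟨rfl, rfl⟩ := (Finset.pair_eq_pair_iff_of_lt hcd (hqr.trans hrs)).1 h₂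
      exact Or.inl ⟨hpq, hqr, hrs⟩
    · obtain ⟨rfl, rfl⟩ := (Finset.pair_eq_pair_iff_of_lt hab (hqr.trans hrs)).1 h₁
      obtain ⟨rfl, rfl⟩ := (Finset.pair_eq_pair_iff_of_lt hcd (hpq.trans hqr)).1 h₂
      exact Or.inr ⟨hpq, hqr, hrs⟩
  · rintro (⟨h₁, h₂, h₃⟩ | ⟨h₁, h₂, h₃⟩)
    · exact ⟨a, c, b, d, h₁, h₂, h₃, Or.inl ⟨rfl, rfl⟩⟩
    · exact ⟨c, a, d, b, h₁, h₂, h₃, Or.inr ⟨rfl, rfl⟩⟩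

open Classical in
noncomputable def noncrossingWith (m : ℕ) (D : Finset (Finset (Fin m))) (d : Finset (Fin m)) :
    Finset (Finset (Fin m)) :=
  (D.erase d).filter fun e => ¬ Crosses m e d

open Classical in
theorem card_noncrossingWith_of_mem {m : ℕ} {D : Finset (Finset (Fin m))}
    {d : Finset (Fin m)} (hd : d ∈ D) (hdd : ¬ Crosses m d d) :
    #(noncrossingWith m D d) = #{e ∈ D | ¬ Crosses m e d} - 1 := by
  rw [noncrossingWith, filter_erase, card_erase_of_mem (mem_filter.2 ⟨hd, hdd⟩)]

def topFan (n : ℕ) (j : Fin n) : Finset (Fin (n+3)) :=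
  {⟨j + 1, by omega⟩, Fin.last (n + 2)}

def zeroFan (n : ℕ) (j : Fin n) : Finset (Fin (n+3)) :=
  {0, ⟨j + 2, by omega⟩}

def fanDiagonals (n : ℕ) : Finset (Finset (Fin (n+3))) :=
  univ.image (topFan n) ∪ univ.image (zeroFan n)

theorem topFan_injective (n : ℕ) : Function.Injective (topFan n) := by
  intro j l h
  have := ((Finset.pair_eq_pair_iff_of_lt (by grind) (by grind)).1 h).1
  simpa [Fin.ext_iff] using this

theorem zeroFan_injective (n : ℕ) : Function.Injective (zeroFan n) := by
  intro j l h
  have := ((Finset.pair_eq_pair_iff_of_lt (by grind) (by grind)).1 h).2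
  simpa [Fin.ext_iff] using this

theorem disjoint_image_topFan_zeroFan (n : ℕ) :
    Disjoint (univ.image (topFan n)) (univ.image (zeroFan n)) := by
  simp only [disjoint_left, mem_image, mem_univ, true_and, not_exists]
  rintro _ ⟨j, rfl⟩ l h
  have : (0 : Fin (n+3)) ∈ topFan n j := h ▸ by simp [zeroFan]
  simp [topFan, Fin.ext_iff] at this

theorem card_filter_fanDiagonals (n : ℕ) (P : Finset (Fin (n+3)) → Prop) [DecidablePred P] :
    #{e ∈ fanDiagonals n | P e} = #{j | P (topFan n j)} + #{j | P (zeroFan n j)} := by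
  rw [fanDiagonals, filter_union, card_union_of_disjoint
      (disjoint_filter_filter (disjoint_image_topFan_zeroFan n)),
    filter_image, filter_image, card_image_of_injective _ (topFan_injective n),
    card_image_of_injective _ (zeroFan_injective n)]

open Classical in
theorem card_noncrossingWith_fanDiagonals_last (n : ℕ) (a : Fin (n+3))
    (ha₀ : 0 < (a : ℕ)) (ha : (a : ℕ) ≤ n) :
    #(noncrossingWith (n+3) (fanDiagonals n) {a, Fin.last (n + 2)}) = (n - 1) + (a - 1) := by
  set d : Finset (Fin (n+3)) := {a, Fin.last (n + 2)}
  have hd : topFan n ⟨a - 1, by omega⟩ = d := by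
    simp only [d, topFan, Nat.sub_add_cancel ha₀]
  have htop (j : Fin n) : ¬ Crosses (n+3) (topFan n j) d := by
    rw [topFan, crosses_pair_iff (by grind) (by grind)]
    grind
  have hzero (j : Fin n) : ¬ Crosses (n+3) (zeroFan n j) d ↔ (j : ℕ) < a - 1 := by
    rw [zeroFan, crosses_pair_iff (by grind) (by grind)]
    grind
  rw [card_noncrossingWith_of_mem (hd ▸ mem_union_left _ (mem_image_of_mem _ (mem_univ _)))
      (by simpa only [hd] using htop ⟨a - 1, by omega⟩), card_filter_fanDiagonals, filter_true_of_mem (fun j _ => htop j),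
    filter_congr (fun j _ => hzero j), card_univ, Fintype.card_fin, Fin.card_filter_val_lt]
  omega

open Classical in
theorem card_noncrossingWith_fanDiagonals_zero (n : ℕ) (hn : 1 ≤ n) :
    #(noncrossingWith (n+3) (fanDiagonals n) {0, (Fin.last (n + 1)).castSucc}) = n - 1 := by
  set d : Finset (Fin (n+3)) := {0, (Fin.last (n + 1)).castSucc}
  have hd : zeroFan n ⟨n - 1, by omega⟩ = d := by
    simp only [d, zeroFan, show n - 1 + 2 = n + 1 by omega]
    rfl
  have htop (j : Fin n) : Crosses (n+3) (topFan n j) d := by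
    rw [topFan, crosses_pair_iff (by grind) (by grind)]
    grind
  have hzero (j : Fin n) : ¬ Crosses (n+3) (zeroFan n j) d := by
    rw [zeroFan, crosses_pair_iff (by grind) (by grind)]
    grind
  rw [card_noncrossingWith_of_mem (hd ▸ mem_union_right _ (mem_image_of_mem _ (mem_univ _)))
      (by simpa only [hd] using hzero ⟨n - 1, by omega⟩), card_filter_fanDiagonals,
    filter_false_of_mem (fun j _ => not_not.2 (htop j)),
    filter_true_of_mem (fun j _ => hzero j), card_empty, card_univ, Fintype.card_fin, zero_add]

open Classical in
/-- Let `D` be the `2n` diagonals `{i, n+2}` (`1 ≤ i ≤ n`)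
and `{0, i+1}` (`1 ≤ i ≤ n`) of the `(n+3)`-gon. Each of `{1, n+2}` and
`{0, n+1}` is non-crossing with exactly `n−1` other elements of `D`; more
generally `{i, n+2}` is non-crossing with exactly `(n−1)+(i−1)` other elements
of `D`. -/
theorem special_diagonals_noncrossing_count (n : ℕ) (hn : 1 ≤ n)
    (D : Finset (Finset (Fin (n+3))))
    (hD : D =
      (Finset.univ.image (fun i : Fin n =>
        ({⟨i.val + 1, by have := i.isLt; omega⟩, ⟨n + 2, by omega⟩} :
          Finset (Fin (n+3))))) ∪
      (Finset.univ.image (fun i : Fin n =>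
        ({⟨0, by omega⟩, ⟨i.val + 2, by have := i.isLt; omega⟩} :
          Finset (Fin (n+3)))))) :
    (((D.erase ({⟨1, by omega⟩, ⟨n + 2, by omega⟩} : Finset (Fin (n+3)))).filter
        (fun e => ¬ Crosses (n+3) e
          ({⟨1, by omega⟩, ⟨n + 2, by omega⟩} : Finset (Fin (n+3))))).card
      = n - 1) ∧
    (((D.erase ({⟨0, by omega⟩, ⟨n + 1, by omega⟩} : Finset (Fin (n+3)))).filter
        (fun e => ¬ Crosses (n+3) e
          ({⟨0, by omega⟩, ⟨n + 1, by omega⟩} : Finset (Fin (n+3))))).card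
      = n - 1) ∧
    (∀ i : ℕ, ∀ _ : 1 ≤ i, ∀ hi : i ≤ n,
      ((D.erase ({⟨i, by omega⟩, ⟨n + 2, by omega⟩} : Finset (Fin (n+3)))).filter
        (fun e => ¬ Crosses (n+3) e
          ({⟨i, by omega⟩, ⟨n + 2, by omega⟩} : Finset (Fin (n+3))))).card
      = (n - 1) + (i - 1)) := by
  subst hD
  exact ⟨card_noncrossingWith_fanDiagonals_last n _ Nat.one_pos hn,
    card_noncrossingWith_fanDiagonals_zero n hn,
    fun i hi₀ hi => card_noncrossingWith_fanDiagonals_last n _ hi₀ hi⟩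
end

section
/- Let D be the set of 2n diagonals of the labeled (n+3)-gon consisting of the snake diagonals δ_1,…,δ_n together with the diagonals α_1,…,α_n, where α_i denotes the unique diagonal that crosses δ_i and no other snake diagonal. If n > 3, then every element of D is non-crossing with at least n of the other elements of D. If n = 3, then α_2 is the unique element of D that is non-crossing with exactly n−1 = 2 of the other elements of D. -/
open Finset

section SnakeAux
open Finset

private def crossesDecidable (m : ℕ) (d e : Finset (Fin m)) :
    Decidable (Crosses m d e) := by unfold Crosses; infer_instance

private def xng (p q r s : ℕ) : Prop := (p < r ∧ r < q ∧ q < s) ∨ (r < p ∧ p < s ∧ s < q)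

private lemma fin_pair_eq {m : ℕ} {a b c d : Fin m} (h : ({a,b} : Finset (Fin m)) = {c,d}) :
    (a = c ∧ b = d) ∨ (a = d ∧ b = c) := by
  have h' : ({a,b} : Set (Fin m)) = {c,d} := by
    have := congrArg (fun s : Finset (Fin m) => (s : Set (Fin m))) h
    simpa using this
  exact Set.pair_eq_pair_iff.mp h'

private lemma pair_inj {m : ℕ} {a b c d : Fin m} (hab : a < b) (hcd : c < d)
    (h : ({a,b} : Finset (Fin m)) = {c,d}) : a = c ∧ b = d := by
  rcases fin_pair_eq h with ⟨rfl, rfl⟩ | ⟨rfl, rfl⟩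
  · exact ⟨rfl, rfl⟩
  · exact absurd (hab.trans hcd) (lt_irrefl _)

private lemma crosses_iff {m : ℕ} {p q r s : Fin m} (hpq : p < q) (hrs : r < s) :
    Crosses m {p,q} {r,s} ↔ xng p.val q.val r.val s.val := by
  constructor
  · rintro ⟨x,y,z,w,h1,h2,h3,(⟨hd,he⟩|⟨hd,he⟩)⟩
    · obtain ⟨rfl,rfl⟩ := pair_inj hpq (h1.trans h2) hd
      obtain ⟨rfl,rfl⟩ := pair_inj hrs (h2.trans h3) he
      exact Or.inl ⟨h1, h2, h3⟩
    · obtain ⟨rfl,rfl⟩ := pair_inj hpq (h2.trans h3) hd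
      obtain ⟨rfl,rfl⟩ := pair_inj hrs (h1.trans h2) he
      exact Or.inr ⟨h1, h2, h3⟩
  · rintro (⟨h1,h2,h3⟩|⟨h1,h2,h3⟩)
    · exact ⟨p, r, q, s, h1, h2, h3, Or.inl ⟨rfl, rfl⟩⟩
    · exact ⟨r, p, s, q, h1, h2, h3, Or.inr ⟨rfl, rfl⟩⟩

private lemma crosses_symm {m : ℕ} {d e : Finset (Fin m)} (h : Crosses m d e) : Crosses m e d := by
  obtain ⟨p,q,r,s,h1,h2,h3,(⟨hd,he⟩|⟨hd,he⟩)⟩ := h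
  · exact ⟨p,q,r,s,h1,h2,h3, Or.inr ⟨he,hd⟩⟩
  · exact ⟨p,q,r,s,h1,h2,h3, Or.inl ⟨he,hd⟩⟩

private lemma crosses_mk_iff {m a b c d : ℕ} (ha : a < m) (hb : b < m) (hc : c < m) (hd : d < m)
    (h1 : a < b) (h2 : c < d) :
    Crosses m {⟨a,ha⟩, ⟨b,hb⟩} {⟨c,hc⟩, ⟨d,hd⟩} ↔ xng a b c d :=
  crosses_iff (Fin.mk_lt_mk.mpr h1) (Fin.mk_lt_mk.mpr h2)

private lemma snake_eq (n : ℕ) (i : Fin n) :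
    snake n i = {(⟨(i.val+2)/2, by have := i.isLt; omega⟩ : Fin (n+3)),
      ⟨n+2-(i.val+1)/2, by omega⟩} := rfl

private lemma crosses_pair_snake_iff {n : ℕ} {p q : Fin (n+3)} (hpq : p < q) (k : Fin n) :
    Crosses (n+3) {p,q} (snake n k) ↔ xng p.val q.val ((k.val+2)/2) (n+2-(k.val+1)/2) := by
  rw [snake_eq]
  exact crosses_iff hpq (Fin.mk_lt_mk.mpr (by have := k.isLt; omega))

/-- Explicit formula for the diagonal crossing exactly `δ i`. -/
private def alph (n : ℕ) (i : Fin n) : Finset (Fin (n+3)) :=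
  if i.val % 2 = 0 then
    {⟨i.val/2, by have := i.isLt; omega⟩, ⟨n+1-i.val/2, by omega⟩}
  else
    {⟨i.val/2+2, by have := i.isLt; omega⟩, ⟨n+2-i.val/2, by omega⟩}

private lemma uniq_even (n a p q : ℕ) (hi : 2*a < n) (hpq : p < q) (hq : q < n+3)
    (h1 : xng p q (a+1) (n+2-a))
    (h2 : 1 ≤ a → ¬ xng p q a (n+2-a))
    (h3 : 2*a+1 < n → ¬ xng p q (a+1) (n+1-a)) :
    p = a ∧ q = n+1-a := by
  unfold xng at *; omega

private lemma uniq_odd (n a p q : ℕ) (hi : 2*a+1 < n) (hpq : p < q) (hq : q < n+3)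
    (h1 : xng p q (a+1) (n+1-a))
    (h2 : ¬ xng p q (a+1) (n+2-a))
    (h3 : 2*a+2 < n → ¬ xng p q (a+2) (n+1-a)) :
    p = a+2 ∧ q = n+2-a := by
  unfold xng at *; omega

private lemma A_eq_alph {n : ℕ} {d : Finset (Fin (n+3))} (i : Fin n)
    (hdiag : IsDiagonal (n+3) d)
    (hx : ∀ k : Fin n, Crosses (n+3) d (snake n k) ↔ k = i) :
    d = alph n i := by
  obtain ⟨a, b, hab, -, rfl⟩ := hdiag
  obtain ⟨p, q, hpq, hd⟩ : ∃ p q : Fin (n+3), p < q ∧ ({a,b} : Finset (Fin (n+3))) = {p,q} := by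
    rcases lt_or_gt_of_ne hab with h | h
    exacts [⟨a, b, h, rfl⟩, ⟨b, a, h, Finset.pair_comm a b⟩]
  rw [hd] at hx ⊢
  have h1 : xng p.val q.val ((i.val+2)/2) (n+2-(i.val+1)/2) :=
    (crosses_pair_snake_iff hpq i).mp ((hx i).mpr rfl)
  have h2 : ∀ j : ℕ, ∀ hj : j < n, j ≠ i.val →
      ¬ xng p.val q.val ((j+2)/2) (n+2-(j+1)/2) := by
    intro j hj hne hxg
    exact hne (congrArg Fin.val ((hx ⟨j,hj⟩).mp ((crosses_pair_snake_iff hpq ⟨j,hj⟩).mpr hxg)))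
  have hq3 : q.val < n+3 := q.isLt
  have hil : i.val < n := i.isLt
  have hpq' : p.val < q.val := hpq
  rcases Nat.even_or_odd i.val with ⟨c, hc⟩ | ⟨c, hc⟩
  · have h1' : xng p.val q.val (c+1) (n+2-c) := by unfold xng at h1 ⊢; omega
    have h2' : 1 ≤ c → ¬ xng p.val q.val c (n+2-c) := by
      intro hcc hcon
      exact h2 (2*c-1) (by omega) (by omega) (by unfold xng at hcon ⊢; omega) 
    have h3' : 2*c+1 < n → ¬ xng p.val q.val (c+1) (n+1-c) := by
      intro hcc hcon
      exact h2 (2*c+1) (by omega) (by omega) (by unfold xng at hcon ⊢; omega)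
    obtain ⟨hp, hq⟩ := uniq_even n c p.val q.val (by omega) hpq' hq3 h1' h2' h3'
    have hm : i.val % 2 = 0 := by omega
    rw [alph, if_pos hm]
    have hp' : p = ⟨i.val/2, by omega⟩ := Fin.ext (by simp only []; omega)
    have hq' : q = ⟨n+1-i.val/2, by omega⟩ := Fin.ext (by simp only []; omega)
    rw [hp', hq']
  · have h1' : xng p.val q.val (c+1) (n+1-c) := by unfold xng at h1 ⊢; omega
    have h2' : ¬ xng p.val q.val (c+1) (n+2-c) := by
      intro hcon
      exact h2 (2*c) (by omega) (by omega) (by unfold xng at hcon ⊢; omega)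
    have h3' : 2*c+2 < n → ¬ xng p.val q.val (c+2) (n+1-c) := by
      intro hcc hcon
      exact h2 (2*c+2) (by omega) (by omega) (by unfold xng at hcon ⊢; omega)
    obtain ⟨hp, hq⟩ := uniq_odd n c p.val q.val (by omega) hpq' hq3 h1' h2' h3'
    have hm : ¬ (i.val % 2 = 0) := by omega
    rw [alph, if_neg hm]
    have hp' : p = ⟨i.val/2+2, by omega⟩ := Fin.ext (by simp only []; omega)
    have hq' : q = ⟨n+2-i.val/2, by omega⟩ := Fin.ext (by simp only []; omega)
    rw [hp', hq']


private lemma snake_inj {n : ℕ} : Function.Injective (snake n) := by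
  intro i j h
  rw [snake_eq, snake_eq] at h
  obtain ⟨h1, h2⟩ := pair_inj (Fin.mk_lt_mk.mpr (by have := i.isLt; omega))
    (Fin.mk_lt_mk.mpr (by have := j.isLt; omega)) h
  have h1' : (i.val+2)/2 = (j.val+2)/2 := congrArg Fin.val h1
  have h2' : n+2-(i.val+1)/2 = n+2-(j.val+1)/2 := congrArg Fin.val h2
  have := i.isLt; have := j.isLt
  exact Fin.ext (by omega)

private lemma alph_ne_snake {n : ℕ} (i j : Fin n) : alph n i ≠ snake n j := by
  intro h
  rw [snake_eq] at h
  have hi := i.isLt; have hj := j.isLt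
  by_cases hm : i.val % 2 = 0
  · rw [alph, if_pos hm] at h
    obtain ⟨h1, h2⟩ := pair_inj (Fin.mk_lt_mk.mpr (by omega)) (Fin.mk_lt_mk.mpr (by omega)) h
    have h1' : i.val/2 = (j.val+2)/2 := congrArg Fin.val h1
    have h2' : n+1-i.val/2 = n+2-(j.val+1)/2 := congrArg Fin.val h2
    omega
  · rw [alph, if_neg hm] at h
    obtain ⟨h1, h2⟩ := pair_inj (Fin.mk_lt_mk.mpr (by omega)) (Fin.mk_lt_mk.mpr (by omega)) h
    have h1' : i.val/2+2 = (j.val+2)/2 := congrArg Fin.val h1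
    have h2' : n+2-i.val/2 = n+2-(j.val+1)/2 := congrArg Fin.val h2
    omega

private lemma alph_inj {n : ℕ} : Function.Injective (alph n) := by
  intro i j h
  have hi := i.isLt; have hj := j.isLt
  by_cases hm : i.val % 2 = 0 <;> by_cases hm' : j.val % 2 = 0
  · rw [alph, if_pos hm, alph, if_pos hm'] at h
    obtain ⟨h1, h2⟩ := pair_inj (Fin.mk_lt_mk.mpr (by omega)) (Fin.mk_lt_mk.mpr (by omega)) h
    have h1' : i.val/2 = j.val/2 := congrArg Fin.val h1
    exact Fin.ext (by omega)
  · rw [alph, if_pos hm, alph, if_neg hm'] at h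
    obtain ⟨h1, h2⟩ := pair_inj (Fin.mk_lt_mk.mpr (by omega)) (Fin.mk_lt_mk.mpr (by omega)) h
    have h1' : i.val/2 = j.val/2+2 := congrArg Fin.val h1
    have h2' : n+1-i.val/2 = n+2-j.val/2 := congrArg Fin.val h2
    omega
  · rw [alph, if_neg hm, alph, if_pos hm'] at h
    obtain ⟨h1, h2⟩ := pair_inj (Fin.mk_lt_mk.mpr (by omega)) (Fin.mk_lt_mk.mpr (by omega)) h
    have h1' : i.val/2+2 = j.val/2 := congrArg Fin.val h1
    have h2' : n+2-i.val/2 = n+1-j.val/2 := congrArg Fin.val h2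
    omega
  · rw [alph, if_neg hm, alph, if_neg hm'] at h
    obtain ⟨h1, h2⟩ := pair_inj (Fin.mk_lt_mk.mpr (by omega)) (Fin.mk_lt_mk.mpr (by omega)) h
    have h1' : i.val/2+2 = j.val/2+2 := congrArg Fin.val h1
    exact Fin.ext (by omega)

private lemma not_crosses_snake_snake {n : ℕ} (i j : Fin n) :
    ¬ Crosses (n+3) (snake n i) (snake n j) := by
  have hi := i.isLt; have hj := j.isLt
  rw [snake_eq, snake_eq, crosses_mk_iff (by omega) (by omega) (by omega) (by omega)
    (by omega) (by omega)]
  unfold xng; omega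

private lemma not_crosses_alph_alph {n : ℕ} (i j : Fin n) (hpar : i.val % 2 = j.val % 2) :
    ¬ Crosses (n+3) (alph n i) (alph n j) := by
  have hi := i.isLt; have hj := j.isLt
  by_cases hm : i.val % 2 = 0
  · rw [alph, if_pos hm, alph, if_pos (hpar ▸ hm),
      crosses_mk_iff (by omega) (by omega) (by omega) (by omega) (by omega) (by omega)]
    unfold xng; omega
  · rw [alph, if_neg hm, alph, if_neg (hpar ▸ hm),
      crosses_mk_iff (by omega) (by omega) (by omega) (by omega) (by omega) (by omega)]
    unfold xng; omega


private lemma count_ge_aux {n : ℕ} (hn : 1 ≤ n) (A : Fin n → Finset (Fin (n+3)))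
    (hAeq : ∀ i, A i = alph n i)
    (hAx : ∀ i k : Fin n, Crosses (n+3) (A i) (snake n k) ↔ k = i)
    (D : Finset (Finset (Fin (n+3))))
    (hD : D = Finset.univ.image (snake n) ∪ Finset.univ.image A)
    (d : Finset (Fin (n+3))) [inst : DecidablePred (fun e => ¬ Crosses (n+3) e d)]
    {i : Fin n} (hd : d = snake n i ∨ d = A i)
    (j : Fin n) (hji : j ≠ i) (hnc : ¬ Crosses (n+3) (A j) d) :
    n ≤ ((D.erase d).filter (fun e => ¬ Crosses (n+3) e d)).card := by
  classical
  set S := insert (A j) ((Finset.univ.image (snake n)).erase (snake n i)) with hS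
  have hsnAd : ∀ k : Fin n, k ≠ i → snake n k ≠ d := by
    intro k hk
    rcases hd with rfl | rfl
    · exact fun h => hk (snake_inj h)
    · rw [hAeq]; exact fun h => alph_ne_snake i k h.symm
  have hsnAc : ∀ k : Fin n, k ≠ i → ¬ Crosses (n+3) (snake n k) d := by
    intro k hk
    rcases hd with rfl | rfl
    · exact not_crosses_snake_snake k i
    · exact fun hc => hk ((hAx i k).mp (crosses_symm hc))
  have hAjne : A j ≠ d := by
    rcases hd with rfl | rfl
    · rw [hAeq]; exact alph_ne_snake j i
    · rw [hAeq, hAeq]; exact fun h => hji (alph_inj h)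
  have hsub : S ⊆ (D.erase d).filter (fun e => ¬ Crosses (n+3) e d) := by
    intro e he
    rw [hS, Finset.mem_insert] at he
    rcases he with rfl | he
    · rw [Finset.mem_filter, Finset.mem_erase]
      exact ⟨⟨hAjne, by
        rw [hD]; exact Finset.mem_union_right _ (Finset.mem_image_of_mem _ (Finset.mem_univ j))⟩,
        hnc⟩
    · rw [Finset.mem_erase] at he
      obtain ⟨hne, hmem⟩ := he
      obtain ⟨k, -, rfl⟩ := Finset.mem_image.mp hmem
      have hk : k ≠ i := fun h => hne (by rw [h])
      rw [Finset.mem_filter, Finset.mem_erase]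
      exact ⟨⟨hsnAd k hk, by rw [hD]; exact Finset.mem_union_left _ hmem⟩, hsnAc k hk⟩
  have hcard : S.card = n := by
    have h3 : A j ∉ (Finset.univ.image (snake n)).erase (snake n i) := by
      intro h
      obtain ⟨k, -, hk⟩ := Finset.mem_image.mp (Finset.mem_of_mem_erase h)
      exact alph_ne_snake j k (by rw [← hAeq]; exact hk.symm)
    rw [hS, Finset.card_insert_of_notMem h3,
      Finset.card_erase_of_mem (Finset.mem_image_of_mem _ (Finset.mem_univ i)),
      Finset.card_image_of_injective _ snake_inj, Finset.card_univ, Fintype.card_fin]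
    omega
  calc n = S.card := hcard.symm
    _ ≤ _ := Finset.card_le_card hsub

end SnakeAux
open Classical in
/-- Let `D` consist of the snake diagonals `δ_1, …, δ_n`
together with the diagonals `α_1, …, α_n`, where `α_i` is the unique diagonal
crossing `δ_i` and no other snake diagonal. If `n > 3`, every element of `D` is
non-crossing with at least `n` other elements of `D`; if `n = 3`, then `α_2` is
the unique element of `D` non-crossing with exactly `n − 1 = 2` other elements
of `D`. -/
theorem snake_alpha_noncrossing_count (n : ℕ)
    (A : Fin n → Finset (Fin (n+3)))
    (hA : ∀ i : Fin n, IsDiagonal (n+3) (A i) ∧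
      (∀ k : Fin n, Crosses (n+3) (A i) (snake n k) ↔ k = i))
    (D : Finset (Finset (Fin (n+3))))
    (hD : D = Finset.univ.image (snake n) ∪ Finset.univ.image A) :
    (3 < n → ∀ d ∈ D,
      n ≤ ((D.erase d).filter (fun e => ¬ Crosses (n+3) e d)).card) ∧
    (n = 3 → ∀ d ∈ D,
      (((D.erase d).filter (fun e => ¬ Crosses (n+3) e d)).card = n - 1 ↔
        ∃ i : Fin n, (i : ℕ) = 1 ∧ d = A i)) := by
  have hAeq : ∀ i, A i = alph n i := fun i => A_eq_alph i (hA i).1 (hA i).2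
  have hAx : ∀ i k : Fin n, Crosses (n+3) (A i) (snake n k) ↔ k = i := fun i => (hA i).2
  constructor
  · intro hn3 d hdD
    rw [hD, Finset.mem_union] at hdD
    rcases hdD with hmem | hmem
    · obtain ⟨i, -, rfl⟩ := Finset.mem_image.mp hmem
      have hiv := i.isLt
      refine count_ge_aux (by omega) A hAeq hAx D hD _ (Or.inl rfl)
        ⟨if i.val = 0 then 1 else 0, by split <;> omega⟩ ?_ ?_
      · intro h
        have hv : (if i.val = 0 then 1 else 0) = i.val := congrArg Fin.val h
        split at hv <;> omega
      · intro hc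
        have hv : i.val = (if i.val = 0 then 1 else 0) :=
          congrArg Fin.val ((hAx _ i).mp hc)
        split at hv <;> omega
    · obtain ⟨i, -, rfl⟩ := Finset.mem_image.mp hmem
      have hiv := i.isLt
      refine count_ge_aux (by omega) A hAeq hAx D hD _ (Or.inr rfl)
        ⟨if i.val < 2 then i.val+2 else i.val-2, by split <;> omega⟩ ?_ ?_
      · intro h
        have hv : (if i.val < 2 then i.val+2 else i.val-2) = i.val := congrArg Fin.val h
        split at hv <;> omega
      · simp only [hAeq]
        refine not_crosses_alph_alph _ i ?_
        show (if i.val < 2 then i.val+2 else i.val-2) % 2 = i.val % 2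
        split <;> omega
  · intro hn3
    subst hn3
    have himg : Finset.univ.image A = Finset.univ.image (alph 3) :=
      Finset.image_congr (fun x _ => hAeq x)
    rw [hD, himg]
    simp only [hAeq]
    letI := crossesDecidable
    intro d hd
    rw [Finset.filter_congr_decidable]
    revert d
    decide
end
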